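/- arXiv:1611.07833 — 3 statements merged into one kernel-verified Lean document; each statement's English description precedes it below -/
import Mathlib

section
/- Let M be an integer with M ≥ 2, and let T > 0, c₂ > 0, ε > 0, β > 1 be real numbers, and L ≥ 0 an integer. Set s_l = M^{-l} · T and N_l = ⌈2 · ε⁻² · c₂ · T^{(β−1)/2} · (1 − M^{-(β−1)/2})^{-1} · s_l^{(β+1)/2}⌉ for l = 0, 1, …, L. Then ∑_{l=0}^{L} c₂ · N_l⁻¹ · s_l^β ≤ (1/2) · ε². -/
theorem stmt_9 (M : ℕ) (hM : 2 ≤ M) (T c₂ ε β : ℝ) (hT : 0 < T) (hc₂ : 0 < c₂)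
    (hε : 0 < ε) (hβ : 1 < β) (L : ℕ)
    (s : ℕ → ℝ) (hs : ∀ l, s l = (M : ℝ) ^ (-(l : ℤ)) * T)
    (N : ℕ → ℤ)
    (hN : ∀ l, N l = ⌈2 * (ε ^ 2)⁻¹ * c₂ * T ^ ((β - 1) / 2) *
      (1 - (M : ℝ) ^ (-((β - 1) / 2)))⁻¹ * s l ^ ((β + 1) / 2)⌉) :
    ∑ l ∈ Finset.range (L + 1), c₂ * ((N l : ℝ))⁻¹ * s l ^ β ≤ 1 / 2 * ε ^ 2 := by
  have hM1 : (1:ℝ) < M := by exact_mod_cast lt_of_lt_of_le one_lt_two (by exact_mod_cast hM)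
  have hM0 : (0:ℝ) < M := lt_trans one_pos hM1
  have hγpos : 0 < (β - 1) / 2 := by linarith
  have hr0 : 0 < (M:ℝ) ^ (-((β - 1) / 2)) := Real.rpow_pos_of_pos hM0 _
  have hr1 : (M:ℝ) ^ (-((β - 1) / 2)) < 1 :=
    Real.rpow_lt_one_of_one_lt_of_neg hM1 (by linarith)
  set r := (M:ℝ) ^ (-((β - 1) / 2)) with hrdef
  have h1r : 0 < 1 - r := by linarith
  have hTγ : 0 < T ^ ((β - 1) / 2) := Real.rpow_pos_of_pos hT _
  set A := 2 * (ε ^ 2)⁻¹ * c₂ * T ^ ((β - 1) / 2) * (1 - r)⁻¹ with hAdef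
  have hApos : 0 < A := by positivity
  have hsl : ∀ l : ℕ, 0 < s l := by
    intro l; rw [hs]; positivity
  have hNl : ∀ l : ℕ, A * s l ^ ((β + 1) / 2) ≤ (N l : ℝ) := by
    intro l; rw [hN l]; exact Int.le_ceil _
  have hNpos : ∀ l : ℕ, (0:ℝ) < (N l : ℝ) := by
    intro l
    refine lt_of_lt_of_le ?_ (hNl l)
    have := Real.rpow_pos_of_pos (hsl l) ((β + 1) / 2)
    positivity
  have key : ∀ l : ℕ, c₂ * ((N l : ℝ))⁻¹ * s l ^ β ≤ c₂ / A * T ^ ((β - 1) / 2) * r ^ l := by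
    intro l
    have hsp : 0 < s l ^ ((β + 1) / 2) := Real.rpow_pos_of_pos (hsl l) _
    have h1 : ((N l : ℝ))⁻¹ ≤ (A * s l ^ ((β + 1) / 2))⁻¹ := by
      apply inv_anti₀ (by positivity) (hNl l)
    have h2 : s l ^ β = s l ^ ((β + 1) / 2) * s l ^ ((β - 1) / 2) := by
      rw [← Real.rpow_add (hsl l)]; ring_nf
    have h3 : s l ^ ((β - 1) / 2) = T ^ ((β - 1) / 2) * r ^ l := by
      rw [hs l, Real.mul_rpow (by positivity) hT.le, mul_comm]
      congr 1
      rw [show ((M:ℝ) ^ (-(l:ℤ))) = (M:ℝ) ^ ((((-(l:ℤ)) : ℤ) : ℝ)) from (Real.rpow_intCast _ _).symm,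
        ← Real.rpow_natCast r l, hrdef, ← Real.rpow_mul hM0.le, ← Real.rpow_mul hM0.le]
      push_cast
      ring_nf
    have hβs : 0 < s l ^ β := Real.rpow_pos_of_pos (hsl l) _
    calc c₂ * ((N l : ℝ))⁻¹ * s l ^ β
        ≤ c₂ * (A * s l ^ ((β + 1) / 2))⁻¹ * s l ^ β := by
          gcongr
      _ = c₂ / A * T ^ ((β - 1) / 2) * r ^ l := by
          rw [h2, h3, mul_inv]
          field_simp
    done
  have hgeom : ∑ l ∈ Finset.range (L + 1), r ^ l ≤ (1 - r)⁻¹ := by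
    have hsum : Summable (fun l : ℕ => r ^ l) := summable_geometric_of_lt_one hr0.le hr1
    calc ∑ l ∈ Finset.range (L + 1), r ^ l
        ≤ ∑' l : ℕ, r ^ l := Summable.sum_le_tsum _ (fun i _ => by positivity) hsum
      _ = (1 - r)⁻¹ := tsum_geometric_of_lt_one hr0.le hr1
  calc ∑ l ∈ Finset.range (L + 1), c₂ * ((N l : ℝ))⁻¹ * s l ^ β
      ≤ ∑ l ∈ Finset.range (L + 1), c₂ / A * T ^ ((β - 1) / 2) * r ^ l :=
        Finset.sum_le_sum (fun l _ => key l)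
    _ = c₂ / A * T ^ ((β - 1) / 2) * ∑ l ∈ Finset.range (L + 1), r ^ l := by
        rw [Finset.mul_sum]
    _ ≤ c₂ / A * T ^ ((β - 1) / 2) * (1 - r)⁻¹ := by
        have : 0 < c₂ / A * T ^ ((β - 1) / 2) := by positivity
        exact mul_le_mul_of_nonneg_left hgeom this.le
    _ = 1 / 2 * ε ^ 2 := by
        rw [hAdef]
        field_simp
end

section
/- Let M be an integer with M ≥ 2, and let T > 0, c₂ > 0, ε > 0 be real numbers, 0 < β < 1, and L ≥ 0 an integer. Set s_l = M^{-l} · T and N_l = ⌈2 · ε⁻² · c₂ · s_L^{-(1−β)/2} · (1 − M^{-(1−β)/2})^{-1} · s_l^{(β+1)/2}⌉ for l = 0, 1, …, L. Then ∑_{l=0}^{L} c₂ · N_l⁻¹ · s_l^β ≤ (1/2) · ε². -/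
theorem stmt_12 (M : ℕ) (hM : 2 ≤ M) (T c₂ ε β : ℝ) (hT : 0 < T) (hc₂ : 0 < c₂)
    (hε : 0 < ε) (hβ0 : 0 < β) (hβ1 : β < 1) (L : ℕ)
    (s : ℕ → ℝ) (hs : ∀ l, s l = (M : ℝ) ^ (-(l : ℤ)) * T)
    (N : ℕ → ℤ)
    (hN : ∀ l, N l = ⌈2 * (ε ^ 2)⁻¹ * c₂ * s L ^ (-((1 - β) / 2)) *
      (1 - (M : ℝ) ^ (-((1 - β) / 2)))⁻¹ * s l ^ ((β + 1) / 2)⌉) :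
    ∑ l ∈ Finset.range (L + 1), c₂ * ((N l : ℝ))⁻¹ * s l ^ β ≤ 1 / 2 * ε ^ 2 := by
  have hm : (1:ℝ) < (M:ℝ) := by exact_mod_cast lt_of_lt_of_le one_lt_two hM
  have hm0 : (0:ℝ) < (M:ℝ) := lt_trans one_pos hm
  set r : ℝ := (M:ℝ) ^ (-((1-β)/2)) with hr
  have hr0 : 0 < r := Real.rpow_pos_of_pos hm0 _
  have hr1 : r < 1 := Real.rpow_lt_one_of_one_lt_of_neg hm (by linarith)
  have h1r : 0 < 1 - r := by linarith
  have hsl : ∀ l, 0 < s l := by intro l; rw [hs l]; positivity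
  set A : ℝ := 2 * (ε ^ 2)⁻¹ * c₂ * s L ^ (-((1 - β) / 2)) * (1 - r)⁻¹ with hA
  have hsL : (0:ℝ) < s L ^ (-((1 - β) / 2)) := Real.rpow_pos_of_pos (hsl L) _
  have hA0 : 0 < A := by rw [hA]; positivity
  have hNge : ∀ l, A * s l ^ ((β+1)/2) ≤ (N l : ℝ) := by
    intro l; rw [hN l]; exact Int.le_ceil _
  have hN0 : ∀ l, (0:ℝ) < (N l : ℝ) := by
    intro l
    refine lt_of_lt_of_le ?_ (hNge l)
    have := Real.rpow_pos_of_pos (hsl l) ((β+1)/2)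
    positivity
  have hterm : ∀ l, c₂ * ((N l : ℝ))⁻¹ * s l ^ β ≤ c₂ * A⁻¹ * s l ^ ((β-1)/2) := by
    intro l
    have hspos := hsl l
    have hp1 : (0:ℝ) < s l ^ ((β+1)/2) := Real.rpow_pos_of_pos hspos _
    have h1 : ((N l:ℝ))⁻¹ ≤ (A * s l ^ ((β+1)/2))⁻¹ :=
      inv_anti₀ (by positivity) (hNge l)
    have h2 : c₂ * ((N l:ℝ))⁻¹ * s l ^ β ≤ c₂ * (A * s l ^ ((β+1)/2))⁻¹ * s l ^ β := by
      have hb : (0:ℝ) ≤ s l ^ β := (Real.rpow_pos_of_pos hspos β).le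
      gcongr
    refine h2.trans_eq ?_
    rw [mul_inv]
    have key : (s l ^ ((β+1)/2))⁻¹ * s l ^ β = s l ^ ((β-1)/2) := by
      rw [← Real.rpow_neg hspos.le, ← Real.rpow_add hspos]
      ring_nf
    calc c₂ * (A⁻¹ * (s l ^ ((β+1)/2))⁻¹) * s l ^ β
        = c₂ * A⁻¹ * ((s l ^ ((β+1)/2))⁻¹ * s l ^ β) := by ring
      _ = c₂ * A⁻¹ * s l ^ ((β-1)/2) := by rw [key]
  have hgeom : ∀ l ∈ Finset.range (L+1),
      s l ^ ((β-1)/2) = s L ^ ((β-1)/2) * r ^ (L - l) := by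
    intro l hl
    have hlL : l ≤ L := Nat.lt_succ_iff.mp (Finset.mem_range.mp hl)
    have hsplit : s l = s L * (M:ℝ) ^ (L - l) := by
      rw [hs l, hs L]
      have h : ((M:ℝ) ^ (L - l) : ℝ) = (M:ℝ) ^ (((L - l : ℕ) : ℤ)) := by
        rw [zpow_natCast]
      rw [h, mul_comm ((M:ℝ) ^ (-(L:ℤ)) * T), ← mul_assoc, ← zpow_add₀ (ne_of_gt hm0)]
      congr 2
      omega
    rw [hsplit, Real.mul_rpow (hsl L).le (by positivity)]
    congr 1
    rw [← Real.rpow_natCast ((M:ℝ)) (L - l), ← Real.rpow_mul hm0.le, hr,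
      ← Real.rpow_natCast ((M:ℝ) ^ (-((1-β)/2))) (L - l), ← Real.rpow_mul hm0.le]
    ring_nf
  have hrefl : ∑ l ∈ Finset.range (L+1), r ^ (L - l)
      = ∑ l ∈ Finset.range (L+1), r ^ l := by
    rw [← Finset.sum_range_reflect]
    apply Finset.sum_congr rfl
    intro i hi
    simp only [Finset.mem_range] at hi
    congr 1
    omega
  have hgs : ∑ l ∈ Finset.range (L+1), r ^ l ≤ (1 - r)⁻¹ := by
    have heq : (r ^ (L+1) - 1)/(r - 1) = (1 - r ^ (L+1))/(1 - r) := by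
      rw [div_eq_div_iff (by linarith) (by linarith)]
      ring
    rw [geom_sum_eq (ne_of_lt hr1), heq, ← one_div]
    have hp : 0 < r ^ (L+1) := pow_pos hr0 _
    gcongr
    linarith
  have hsLp : (0:ℝ) < s L ^ ((β-1)/2) := Real.rpow_pos_of_pos (hsl L) _
  have hsum1 : ∑ l ∈ Finset.range (L+1), s l ^ ((β-1)/2)
      ≤ s L ^ ((β-1)/2) * (1 - r)⁻¹ := by
    rw [Finset.sum_congr rfl hgeom, ← Finset.mul_sum, hrefl]
    exact mul_le_mul_of_nonneg_left hgs hsLp.le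
  have hsum : ∑ l ∈ Finset.range (L + 1), c₂ * ((N l : ℝ))⁻¹ * s l ^ β
      ≤ c₂ * A⁻¹ * (s L ^ ((β-1)/2) * (1 - r)⁻¹) := by
    calc ∑ l ∈ Finset.range (L + 1), c₂ * ((N l : ℝ))⁻¹ * s l ^ β
        ≤ ∑ l ∈ Finset.range (L + 1), c₂ * A⁻¹ * s l ^ ((β-1)/2) :=
          Finset.sum_le_sum fun l _ => hterm l
      _ = c₂ * A⁻¹ * ∑ l ∈ Finset.range (L + 1), s l ^ ((β-1)/2) := by
          rw [Finset.mul_sum]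
      _ ≤ c₂ * A⁻¹ * (s L ^ ((β-1)/2) * (1 - r)⁻¹) := by
          apply mul_le_mul_of_nonneg_left hsum1
          positivity
  refine hsum.trans_eq ?_
  have hexp : s L ^ (-((1 - β) / 2)) = s L ^ ((β-1)/2) := by congr 1; ring
  rw [hA, hexp]
  field_simp
end

section
/- Let M be an integer with M ≥ 2, and let T > 0, c₂ > 0, ε > 0 be real numbers, 0 < β < 1, and L ≥ 0 an integer. Set s_l = M^{-l} · T and N_l = ⌈2 · ε⁻² · c₂ · s_L^{-(1−β)/2} · (1 − M^{-(1−β)/2})^{-1} · s_l^{(β+1)/2}⌉ for l = 0, 1, …, L. Then ∑_{l=0}^{L} N_l · s_l^{-1} ≤ 2 · ε⁻² · c₂ · s_L^{-(1−β)} · (1 − M^{-(1−β)/2})^{-2} + ∑_{l=0}^{L} s_l^{-1}. -/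
theorem stmt_14 (M : ℕ) (hM : 2 ≤ M) (T c₂ ε β : ℝ) (hT : 0 < T) (hc₂ : 0 < c₂)
    (hε : 0 < ε) (hβ0 : 0 < β) (hβ1 : β < 1) (L : ℕ)
    (s : ℕ → ℝ) (hs : ∀ l, s l = (M : ℝ) ^ (-(l : ℤ)) * T)
    (N : ℕ → ℤ)
    (hN : ∀ l, N l = ⌈2 * (ε ^ 2)⁻¹ * c₂ * s L ^ (-((1 - β) / 2)) *
      (1 - (M : ℝ) ^ (-((1 - β) / 2)))⁻¹ * s l ^ ((β + 1) / 2)⌉) :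
    ∑ l ∈ Finset.range (L + 1), (N l : ℝ) * (s l)⁻¹ ≤
      2 * (ε ^ 2)⁻¹ * c₂ * s L ^ (-(1 - β)) *
          (1 - (M : ℝ) ^ (-((1 - β) / 2)))⁻¹ ^ 2 +
        ∑ l ∈ Finset.range (L + 1), (s l)⁻¹ := by
  have hβ : (0:ℝ) < 1 - β := by linarith
  have hr0 : (0:ℝ) < (1 - β) / 2 := by linarith
  have hM1 : (1:ℝ) < M := by exact_mod_cast lt_of_lt_of_le one_lt_two hM
  have hM0 : (0:ℝ) ≤ M := by linarith
  set r := (1 - β) / 2 with hr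
  set a := (M:ℝ) ^ r with ha
  have ha1 : 1 < a := Real.one_lt_rpow_iff_of_pos (by linarith) |>.mpr (Or.inl ⟨hM1, hr0⟩)
  have ha0 : 0 < a := by linarith
  have hq : (M:ℝ) ^ (-r) = a⁻¹ := by rw [ha, Real.rpow_neg hM0]
  have hq1 : (0:ℝ) < 1 - (M:ℝ) ^ (-r) := by
    rw [hq]; have : a⁻¹ < 1 := inv_lt_one_of_one_lt₀ ha1; linarith
  have hsl : ∀ l, 0 < s l := fun l => by rw [hs]; positivity
  -- rewrite s l ^ (-r)
  have hslr : ∀ l : ℕ, s l ^ (-r) = a ^ l * T ^ (-r) := by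
    intro l
    rw [hs l, Real.mul_rpow (by positivity) hT.le]
    congr 1
    rw [show ((M:ℝ) ^ (-(l:ℤ))) = (M:ℝ) ^ ((-(l:ℤ) : ℤ) : ℝ) from (Real.rpow_intCast _ _).symm]
    rw [← Real.rpow_natCast a l, ha, ← Real.rpow_mul hM0, ← Real.rpow_mul hM0]
    push_cast
    ring_nf
  -- geometric sum bound
  have hgeom : ∑ l ∈ Finset.range (L + 1), a ^ l ≤ a ^ L * (1 - a⁻¹)⁻¹ := by
    rw [geom_sum_eq (ne_of_gt ha1)]
    have hane : a - 1 ≠ 0 := by linarith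
    have h1 : (1 - a⁻¹)⁻¹ = a / (a - 1) := by
      rw [eq_div_iff hane]
      field_simp
    rw [h1]
    rw [div_le_iff₀ (by linarith)]
    have : a ^ L * (a / (a - 1)) * (a - 1) = a ^ (L + 1) := by
      rw [mul_assoc, div_mul_cancel₀ _ hane, ← pow_succ]
    rw [this]
    have : (0:ℝ) < a ^ (L+1) := by positivity
    linarith [pow_pos ha0 (L+1)]
  have hsum : ∑ l ∈ Finset.range (L + 1), s l ^ (-r) ≤ s L ^ (-r) * (1 - (M:ℝ) ^ (-r))⁻¹ := by
    rw [hq]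
    calc ∑ l ∈ Finset.range (L + 1), s l ^ (-r)
        = (∑ l ∈ Finset.range (L + 1), a ^ l) * T ^ (-r) := by
          rw [Finset.sum_mul]; exact Finset.sum_congr rfl fun l _ => hslr l
      _ ≤ (a ^ L * (1 - a⁻¹)⁻¹) * T ^ (-r) := by
          apply mul_le_mul_of_nonneg_right hgeom (Real.rpow_nonneg hT.le _)
      _ = s L ^ (-r) * (1 - a⁻¹)⁻¹ := by rw [hslr L]; ring
  -- constant
  set C := 2 * (ε ^ 2)⁻¹ * c₂ * s L ^ (-r) * (1 - (M:ℝ) ^ (-r))⁻¹ with hC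
  have hC0 : 0 < C := by
    have := Real.rpow_pos_of_pos (hsl L) (-r)
    have := inv_pos.mpr hq1
    positivity
  -- pointwise bound
  have hpt : ∀ l ∈ Finset.range (L + 1), (N l : ℝ) * (s l)⁻¹ ≤
      C * s l ^ (-r) + (s l)⁻¹ := by
    intro l _
    have h1 : (N l : ℝ) ≤ C * s l ^ ((β + 1) / 2) + 1 := by
      rw [hN l]
      have := Int.ceil_lt_add_one (C * s l ^ ((β + 1) / 2))
      calc ((⌈2 * (ε ^ 2)⁻¹ * c₂ * s L ^ (-r) * (1 - (M:ℝ) ^ (-r))⁻¹ * s l ^ ((β + 1) / 2)⌉ : ℤ) : ℝ)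
          = (⌈C * s l ^ ((β + 1) / 2)⌉ : ℝ) := by rw [hC]
        _ ≤ C * s l ^ ((β + 1) / 2) + 1 := le_of_lt (Int.ceil_lt_add_one _)
    have hinv : (0:ℝ) < (s l)⁻¹ := inv_pos.mpr (hsl l)
    calc (N l : ℝ) * (s l)⁻¹ ≤ (C * s l ^ ((β + 1) / 2) + 1) * (s l)⁻¹ :=
          mul_le_mul_of_nonneg_right h1 hinv.le
      _ = C * (s l ^ ((β + 1) / 2) * (s l)⁻¹) + (s l)⁻¹ := by ring
      _ = C * s l ^ (-r) + (s l)⁻¹ := by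
          congr 2
          rw [show (s l)⁻¹ = s l ^ (-1 : ℝ) by rw [Real.rpow_neg_one],
            ← Real.rpow_add (hsl l)]
          congr 1
          rw [hr]; ring
  calc ∑ l ∈ Finset.range (L + 1), (N l : ℝ) * (s l)⁻¹
      ≤ ∑ l ∈ Finset.range (L + 1), (C * s l ^ (-r) + (s l)⁻¹) :=
        Finset.sum_le_sum hpt
    _ = C * ∑ l ∈ Finset.range (L + 1), s l ^ (-r) + ∑ l ∈ Finset.range (L + 1), (s l)⁻¹ := by
        rw [Finset.sum_add_distrib, Finset.mul_sum]
    _ ≤ C * (s L ^ (-r) * (1 - (M:ℝ) ^ (-r))⁻¹) + ∑ l ∈ Finset.range (L + 1), (s l)⁻¹ := by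
        gcongr
    _ ≤ 2 * (ε ^ 2)⁻¹ * c₂ * s L ^ (-(1 - β)) * (1 - (M:ℝ) ^ (-r))⁻¹ ^ 2 +
        ∑ l ∈ Finset.range (L + 1), (s l)⁻¹ := by
        gcongr ?_ + _
        rw [hC]
        apply le_of_eq
        have h2 : s L ^ (-r) * s L ^ (-r) = s L ^ (-(1 - β)) := by
          rw [← Real.rpow_add (hsl L)]; congr 1; rw [hr]; ring
        calc 2 * (ε ^ 2)⁻¹ * c₂ * s L ^ (-r) * (1 - (M:ℝ) ^ (-r))⁻¹ *
              (s L ^ (-r) * (1 - (M:ℝ) ^ (-r))⁻¹)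
            = 2 * (ε ^ 2)⁻¹ * c₂ * (s L ^ (-r) * s L ^ (-r)) * (1 - (M:ℝ) ^ (-r))⁻¹ ^ 2 := by
              ring
          _ = 2 * (ε ^ 2)⁻¹ * c₂ * s L ^ (-(1 - β)) * (1 - (M:ℝ) ^ (-r))⁻¹ ^ 2 := by rw [h2]
end
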